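/- arXiv:1305.4909 — 5 statements merged into one kernel-verified Lean document; each statement's English description precedes it below -/
import Mathlib

section
/- Let G be a finite graph, let N be a nested proper separation system of G, and let (T,𝒱) be a tree-decomposition of G such that the map assigning to each oriented edge of T the separation it induces is a bijection onto N. Then an orientation O of N equals O(t) for some node t of T if and only if O is consistent. -/
open SimpleGraph Set

namespace CanonicalTD

variable {V : Type*} {ι : Type*}

/-- `p = (A,B)` is a separation of `G`: `A ∪ B = V` and no edge between `A∖B` and `B∖A`. -/
def IsSep (G : SimpleGraph V) (p : Set V × Set V) : Prop :=
  p.1 ∪ p.2 = univ ∧ ∀ a ∈ p.1 \ p.2, ∀ b ∈ p.2 \ p.1, ¬G.Adj a b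

/-- The order `|A ∩ B|` of a separation `(A,B)`. -/
noncomputable def sepOrder (p : Set V × Set V) : ℕ := (p.1 ∩ p.2).ncard

/-- A separation is proper if both `A∖B` and `B∖A` are nonempty. -/
def ProperSep (p : Set V × Set V) : Prop := (p.1 \ p.2).Nonempty ∧ (p.2 \ p.1).Nonempty

/-- The partial order on separations: `(A,B) ≤ (C,D)` iff `A ⊆ C` and `D ⊆ B`. -/
def SepLE (p q : Set V × Set V) : Prop := p.1 ⊆ q.1 ∧ q.2 ⊆ p.2

/-- Two separations are nested if they become comparable after possibly inverting. -/
def Nested (p q : Set V × Set V) : Prop :=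
  SepLE p q ∨ SepLE q p ∨ SepLE p q.swap ∨ SepLE q.swap p

/-- A separation `(A,B)` is tight if every vertex of `A ∩ B` has a neighbour in `A∖B`
and a neighbour in `B∖A`. -/
def TightSep (G : SimpleGraph V) (p : Set V × Set V) : Prop :=
  ∀ v ∈ p.1 ∩ p.2, (∃ a ∈ p.1 \ p.2, G.Adj v a) ∧ ∃ b ∈ p.2 \ p.1, G.Adj v b

/-- `S_k`: the set of all proper separations of `G` of order `< k`. -/
def Sk (G : SimpleGraph V) (k : ℕ) : Set (Set V × Set V) :=
  {p | IsSep G p ∧ ProperSep p ∧ sepOrder p < k}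

/-- A separation system of `G`: a set of separations closed under inverses. -/
def IsSepSystem (G : SimpleGraph V) (N : Set (Set V × Set V)) : Prop :=
  (∀ p ∈ N, IsSep G p) ∧ ∀ p ∈ N, p.swap ∈ N

def NestedSystem (N : Set (Set V × Set V)) : Prop :=
  ∀ p ∈ N, ∀ q ∈ N, Nested p q

def ProperSystem (N : Set (Set V × Set V)) : Prop := ∀ p ∈ N, ProperSep p

/-- An orientation of `N`: contains exactly one of `(A,B)`, `(B,A)` for each `(A,B) ∈ N`. -/
def IsOrientation (N O : Set (Set V × Set V)) : Prop :=
  O ⊆ N ∧ ∀ p ∈ N, (p ∈ O ↔ p.swap ∉ O)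

/-- Consistency: no distinct `(A,B),(C,D) ∈ O` with `(D,C) ≤ (A,B)`. -/
def Consistent (O : Set (Set V × Set V)) : Prop :=
  ∀ p ∈ O, ∀ q ∈ O, p ≠ q → ¬SepLE q.swap p

/-- A `k`-profile of `G`. -/
def IsProfile (G : SimpleGraph V) (k : ℕ) (P : Set (Set V × Set V)) : Prop :=
  IsOrientation (Sk G k) P ∧ Consistent P ∧
    ∀ p ∈ P, ∀ q ∈ P, (p.2 ∩ q.2, p.1 ∪ q.1) ∉ P

/-- `(T, Vt)` is a tree-decomposition of `G`. -/
def IsTreeDecomp (G : SimpleGraph V) (T : SimpleGraph ι) (Vt : ι → Set V) : Prop :=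
  T.IsTree ∧ (⋃ t, Vt t) = univ ∧
  (∀ u v, G.Adj u v → ∃ t, u ∈ Vt t ∧ v ∈ Vt t) ∧
  ∀ (t1 t3 : ι) (w : T.Walk t1 t3), w.IsPath →
    ∀ t2 ∈ w.support, Vt t1 ∩ Vt t3 ⊆ Vt t2

/-- The vertex set of the component of `T - t1t2` containing `t1`. -/
def side (T : SimpleGraph ι) (t1 t2 : ι) : Set ι :=
  {s | (T.deleteEdges {s(t1, t2)}).Reachable t1 s}

/-- The separation induced by the oriented edge `(t1, t2)` of `T`. -/
def inducedSep (T : SimpleGraph ι) (Vt : ι → Set V) (t1 t2 : ι) : Set V × Set V :=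
  (⋃ s ∈ side T t1 t2, Vt s, ⋃ s ∈ side T t2 t1, Vt s)

/-- The set of separations induced by oriented edges of `T`. -/
def inducedSeps (T : SimpleGraph ι) (Vt : ι → Set V) : Set (Set V × Set V) :=
  {p | ∃ t1 t2, T.Adj t1 t2 ∧ p = inducedSep T Vt t1 t2}

/-- `O(t)`: separations induced by oriented edges `(t1,t2)` with `t` in the component of `t2`. -/
def Otow (T : SimpleGraph ι) (Vt : ι → Set V) (t : ι) : Set (Set V × Set V) :=
  {p | ∃ t1 t2, T.Adj t1 t2 ∧ t ∈ side T t2 t1 ∧ p = inducedSep T Vt t1 t2}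

/-- The map assigning to each oriented edge of `T` its induced separation is a bijection
onto `N`. -/
def EdgeSepBij (T : SimpleGraph ι) (Vt : ι → Set V) (N : Set (Set V × Set V)) : Prop :=
  (∀ t1 t2, T.Adj t1 t2 → inducedSep T Vt t1 t2 ∈ N) ∧
  ∀ p ∈ N, ∃! e : ι × ι, T.Adj e.1 e.2 ∧ inducedSep T Vt e.1 e.2 = p

/-- The tree-decomposition has adhesion `< k`. -/
def AdhesionLt (T : SimpleGraph ι) (Vt : ι → Set V) (k : ℕ) : Prop :=
  ∀ t1 t2, T.Adj t1 t2 → (Vt t1 ∩ Vt t2).ncard < k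

/-- The tree-decomposition is canonical: the automorphism group of `G` acts on `T`
compatibly with the parts. -/
def Canonical (G : SimpleGraph V) (T : SimpleGraph ι) (Vt : ι → Set V) : Prop :=
  ∃ ρ : (G ≃g G) → (T ≃g T),
    (∀ φ ψ : G ≃g G, ρ (φ.trans ψ) = (ρ φ).trans (ρ ψ)) ∧
    ∀ (φ : G ≃g G) (t : ι), (⇑φ) '' Vt t = Vt (ρ φ t)

/-- `X` is `(<k)`-inseparable in `G`. -/
def Inseparable' (G : SimpleGraph V) (k : ℕ) (X : Set V) : Prop :=
  ∀ p : Set V × Set V, IsSep G p → sepOrder p < k → X ⊆ p.1 ∨ X ⊆ p.2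

/-- `X` is a `k`-block of `G`: a maximal `(<k)`-inseparable set of at least `k` vertices. -/
def IsBlock (G : SimpleGraph V) (k : ℕ) (X : Set V) : Prop :=
  k ≤ X.ncard ∧ Inseparable' G k X ∧
    ∀ Y, Inseparable' G k Y → X ⊆ Y → Y = X

/-- The `k`-profile `P_k(X)` induced by a `k`-block `X`. -/
def blockProfile (G : SimpleGraph V) (k : ℕ) (X : Set V) : Set (Set V × Set V) :=
  {p | p ∈ Sk G k ∧ X ⊆ p.2 ∧ ¬X ⊆ p.1}

/-- `p` is a `≤`-maximal element of `M`. -/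
def MaxIn (M : Set (Set V × Set V)) (p : Set V × Set V) : Prop :=
  p ∈ M ∧ ∀ q ∈ M, SepLE p q → q = p

/-- The `k`-block `X` is well separated in `S`: the maximal elements of `P_k(X) ∩ S`
are pairwise nested. -/
def WellSepIn (G : SimpleGraph V) (k : ℕ) (X : Set V) (S : Set (Set V × Set V)) : Prop :=
  ∀ p q, MaxIn (blockProfile G k X ∩ S) p → MaxIn (blockProfile G k X ∩ S) q → Nested p q

/-- `D` is the vertex set of a component of `G - X`. -/
def IsCompOf (G : SimpleGraph V) (X D : Set V) : Prop :=
  D ⊆ Xᶜ ∧ (G.induce D).Connected ∧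
    ∀ D', D ⊆ D' → D' ⊆ Xᶜ → (G.induce D').Connected → D' = D

/-- `S(X)`: the set of tight separations `(A,B)` with `X ⊆ B` and `A∖B` the vertex set of
a component of `G - X`. -/
def SX (G : SimpleGraph V) (X : Set V) : Set (Set V × Set V) :=
  {p | IsSep G p ∧ TightSep G p ∧ X ⊆ p.2 ∧ IsCompOf G X (p.1 \ p.2)}

/-- `G` is `m`-connected. -/
def IsKConnected (G : SimpleGraph V) [Fintype V] (m : ℕ) : Prop :=
  m < Fintype.card V ∧ ∀ U : Set V, U.ncard < m → (G.induce Uᶜ).Connected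

/-- The tree-decomposition distinguishes the set `Profs` of profiles. -/
def DistinguishesProfiles (T : SimpleGraph ι) (Vt : ι → Set V)
    (Profs : Set (Set (Set V × Set V))) : Prop :=
  ∀ P ∈ Profs, ∀ P' ∈ Profs, P ≠ P' → ∃ p ∈ inducedSeps T Vt, p ∈ P ∧ p.swap ∈ P'

/-- The tree-decomposition distinguishes every two distinct `k`-blocks efficiently. -/
def DistinguishesBlocksEff (G : SimpleGraph V) (k : ℕ) (T : SimpleGraph ι)
    (Vt : ι → Set V) : Prop :=
  ∀ X X', IsBlock G k X → IsBlock G k X' → X ≠ X' →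
    ∃ p ∈ inducedSeps T Vt, X ⊆ p.1 ∧ X' ⊆ p.2 ∧
      ∀ q : Set V × Set V, IsSep G q → X ⊆ q.1 → X' ⊆ q.2 → sepOrder p ≤ sepOrder q

/-!
The sides of the oriented edges of a tree are nested (`side_nested`), and by the path condition of
a tree-decomposition the separator of the separation induced by an edge `(a, b)` lies in `Vt a`.
So if two separations `(A, B) ≠ (C, D)` oriented towards the same node satisfy `(D, C) ≤ (A, B)`,
either their sides are nested so that `D ⊆ A ∩ B ⊆ C` (or symmetrically `B ⊆ C ∩ D ⊆ A`),
contradicting properness, or `(C, D) = (B, A)`, which injectivity of the edge-separation map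
excludes. Conversely, given a consistent orientation, a node `t` towards which a maximum number of
its edges point has all of them pointing to it: if an edge `(a, b)` of the orientation pointed away
from `t`, every edge pointing to `t` would also point to `b`, as does `(a, b)`, against maximality.
-/

section Sides

variable {T : SimpleGraph ι} {a b c d x y : ι}

lemma mem_side_self (T : SimpleGraph ι) (a b : ι) : a ∈ side T a b := Reachable.refl a

lemma mem_side_swap_iff : x ∈ side T b a ↔ (T.deleteEdges {s(a, b)}).Reachable b x := by
  rw [side, mem_ofPred_eq, Sym2.eq_swap]

lemma mem_side_of_adj (hxy : T.Adj x y) (hne : s(x, y) ≠ s(a, b)) (hx : x ∈ side T a b) :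
    y ∈ side T a b :=
  Reachable.trans hx (deleteEdges_adj.mpr ⟨hxy, by simpa using hne⟩).reachable

lemma notMem_side_swap (hT : T.IsAcyclic) (hab : T.Adj a b) (hx : x ∈ side T a b) :
    x ∉ side T b a := fun hx' =>
  isBridge_iff.mp (isAcyclic_iff_forall_isBridge.mp hT hab)
    (Reachable.trans hx (mem_side_swap_iff.mp hx').symm)

lemma mem_side_or_mem_side_swap (hT : T.Connected) (hab : T.Adj a b) (x : ι) :
    x ∈ side T a b ∪ side T b a := by
  by_contra hx
  obtain ⟨w⟩ := hT.preconnected a x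
  obtain ⟨⟨⟨y, z⟩, hyz⟩, -, hy, hz⟩ :=
    w.exists_boundary_dart _ (.inl (mem_side_self T a b)) hx
  apply hz
  by_cases hne : s(y, z) = s(a, b)
  · rcases Sym2.eq_iff.mp hne with ⟨-, rfl⟩ | ⟨-, rfl⟩
    · exact .inr (mem_side_self T z a)
    · exact .inl (mem_side_self T z b)
  · refine hy.imp (mem_side_of_adj hyz hne) (mem_side_of_adj hyz ?_)
    rwa [Sym2.eq_swap (a := b)]

lemma side_swap_eq_compl (hT : T.IsTree) (hab : T.Adj a b) : side T b a = (side T a b)ᶜ := by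
  ext x
  exact ⟨fun hx hx' => notMem_side_swap hT.isAcyclic hab hx' hx,
    (mem_side_or_mem_side_swap hT.connected hab x).resolve_left⟩

lemma side_subset_side (hc : c ∉ side T a b) (ha : a ∈ side T c d) :
    side T a b ⊆ side T c d := by
  classical
  rintro y ⟨w⟩
  have hsupp : ∀ v ∈ w.support, v ∈ side T a b := fun v hv => ⟨w.takeUntil v hv⟩
  refine ha.trans ⟨w.transfer _ fun e he => ?_⟩
  have heT : e ∈ T.edgeSet := edgeSet_deleteEdges (G := T) _ ▸ w.edges_subset_edgeSet he |>.1
  refine edgeSet_deleteEdges (G := T) _ ▸ ⟨heT, ?_⟩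
  rintro rfl
  exact hc (hsupp c (w.fst_mem_support_of_mem_edges he))

lemma side_nested (hT : T.IsTree) (hab : T.Adj a b) (hcd : T.Adj c d)
    (hne : s(c, d) ≠ s(a, b)) :
    side T a b ⊆ side T c d ∨ side T c d ⊆ side T a b ∨
      Disjoint (side T a b) (side T c d) ∨ side T a b ∪ side T c d = univ := by
  have hba := side_swap_eq_compl hT hab
  have hdc := side_swap_eq_compl hT hcd
  by_cases hc : c ∈ side T a b
  · have hd : d ∈ side T a b := mem_side_of_adj hcd hne hc
    by_cases hb : b ∈ side T c d
    · have h := side_subset_side (by rw [hba]; exact (· hc)) hb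
      rw [hba] at h
      exact .inr <| .inr <| .inr <| compl_subset_iff_union.mp h
    · have hb' : b ∈ side T d c := by rw [hdc]; exact hb
      have h := side_subset_side (by rw [hba]; exact (· hd)) hb'
      rw [hba, hdc] at h
      exact .inr <| .inl <| compl_subset_compl.mp h
  · have hd : d ∉ side T a b := fun hd =>
      hc (mem_side_of_adj hcd.symm (by rwa [Sym2.eq_swap]) hd)
    by_cases ha : a ∈ side T c d
    · exact .inl (side_subset_side hc ha)
    · have h := side_subset_side hd (by rw [hdc]; exact ha : a ∈ side T d c)
      rw [hdc] at h
      exact .inr <| .inr <| .inl <| subset_compl_iff_disjoint_right.mp h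

end Sides

section TreeDecomp

variable {G : SimpleGraph V} {T : SimpleGraph ι} {Vt : ι → Set V} {N O : Set (Set V × Set V)}
  {a b c d t u w : ι}

lemma IsTreeDecomp.inter_subset_of_mem_side (htd : IsTreeDecomp G T Vt) (hab : T.Adj a b)
    (hu : u ∈ side T a b) (hw : w ∈ side T b a) : Vt u ∩ Vt w ⊆ Vt a := by
  obtain ⟨P, hP⟩ := (htd.1.connected.preconnected u w).exists_isPath
  refine htd.2.2.2 u w P hP a ?_
  by_contra ha
  have hP' : s(a, b) ∉ P.edges := fun h => ha (P.fst_mem_support_of_mem_edges h)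
  exact notMem_side_swap htd.1.isAcyclic hab (hu.trans ⟨P.toDeleteEdge _ hP'⟩) hw

lemma IsTreeDecomp.inducedSep_inter_subset (htd : IsTreeDecomp G T Vt) (hab : T.Adj a b) :
    (inducedSep T Vt a b).1 ∩ (inducedSep T Vt a b).2 ⊆ Vt a := by
  rintro v ⟨hv₁, hv₂⟩
  obtain ⟨u, hu, hvu⟩ := mem_iUnion₂.mp hv₁
  obtain ⟨w, hw, hvw⟩ := mem_iUnion₂.mp hv₂
  exact htd.inter_subset_of_mem_side hab hu hw ⟨hvu, hvw⟩

lemma IsTreeDecomp.not_snd_subset_fst_of_side_subset (htd : IsTreeDecomp G T Vt)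
    (hab : T.Adj a b) (hcd : T.Adj c d) (hproper : ProperSep (inducedSep T Vt c d))
    (h : side T a b ⊆ side T c d) : ¬(inducedSep T Vt c d).2 ⊆ (inducedSep T Vt a b).1 := by
  intro hsub
  obtain ⟨v, hv₂, hv₁⟩ := hproper.2
  have hsides : side T d c ⊆ side T b a := by
    rw [side_swap_eq_compl htd.1 hab, side_swap_eq_compl htd.1 hcd]
    exact compl_subset_compl.mpr h
  have hva : v ∈ Vt a :=
    htd.inducedSep_inter_subset hab ⟨hsub hv₂, biUnion_subset_biUnion_left hsides hv₂⟩
  exact hv₁ (subset_biUnion_of_mem (h (mem_side_self T a b)) hva)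

lemma EdgeSepBij.eq_of_inducedSep_eq (hbij : EdgeSepBij T Vt N) (hab : T.Adj a b)
    (hcd : T.Adj c d) (h : inducedSep T Vt a b = inducedSep T Vt c d) : (a, b) = (c, d) := by
  obtain ⟨e, -, huniq⟩ := hbij.2 _ (hbij.1 a b hab)
  exact (huniq (a, b) ⟨hab, rfl⟩).trans (huniq (c, d) ⟨hcd, h.symm⟩).symm

theorem IsTreeDecomp.consistent_Otow (htd : IsTreeDecomp G T Vt) (hbij : EdgeSepBij T Vt N)
    (hproper : ∀ a b, T.Adj a b → ProperSep (inducedSep T Vt a b)) (t : ι) :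
    Consistent (Otow T Vt t) := by
  rintro _ ⟨a, b, hab, hta, rfl⟩ _ ⟨c, d, hcd, htc, rfl⟩ hne ⟨h₁, h₂⟩
  have hta' : t ∉ side T a b := notMem_side_swap htd.1.isAcyclic hab.symm hta
  have htc' : t ∉ side T c d := notMem_side_swap htd.1.isAcyclic hcd.symm htc
  have hedge : s(c, d) ≠ s(a, b) := by
    intro h
    rcases Sym2.eq_iff.mp h with ⟨rfl, rfl⟩ | ⟨rfl, rfl⟩
    · exact hne rfl
    · exact hta' htc
  rcases side_nested htd.1 hab hcd hedge with h | h | h | h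
  · exact htd.not_snd_subset_fst_of_side_subset hab hcd (hproper c d hcd) h h₁
  · exact htd.not_snd_subset_fst_of_side_subset hcd hab (hproper a b hab) h h₂
  · have h₃ : side T c d ⊆ side T b a := by
      rw [side_swap_eq_compl htd.1 hab]; exact subset_compl_iff_disjoint_left.mpr h
    have h₄ : side T a b ⊆ side T d c := by
      rw [side_swap_eq_compl htd.1 hcd]; exact subset_compl_iff_disjoint_right.mpr h
    have hswap : inducedSep T Vt c d = inducedSep T Vt b a :=
      Prod.ext (biUnion_subset_biUnion_left h₃ |>.antisymm h₂)
        (h₁.antisymm (biUnion_subset_biUnion_left h₄))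
    obtain ⟨rfl, rfl⟩ := Prod.mk.inj (hbij.eq_of_inducedSep_eq hcd hab.symm hswap)
    exact hedge Sym2.eq_swap
  · exact htc' ((h ▸ mem_univ t : t ∈ side T a b ∪ side T c d).resolve_left hta')

lemma IsOrientation.swap_notMem {p : Set V × Set V} (hO : IsOrientation N O) (hp : p ∈ O) :
    p.swap ∉ O :=
  (hO.2 p (hO.1 hp)).mp hp

def edgesTowards (T : SimpleGraph ι) (Vt : ι → Set V) (O : Set (Set V × Set V)) (t : ι) :
    Set (ι × ι) :=
  {e | T.Adj e.1 e.2 ∧ inducedSep T Vt e.1 e.2 ∈ O ∧ t ∈ side T e.2 e.1}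

lemma edgesTowards_subset (hT : T.IsTree) (hbij : EdgeSepBij T Vt N) (hO : IsOrientation N O)
    (hcons : Consistent O) (hab : T.Adj a b) (hp : inducedSep T Vt a b ∈ O)
    (ht : t ∈ side T a b) : edgesTowards T Vt O t ⊆ edgesTowards T Vt O b := by
  rintro ⟨c, d⟩ ⟨hcd, hq, htc : t ∈ side T d c⟩
  refine ⟨hcd, hq, ?_⟩
  by_contra hb
  rw [side_swap_eq_compl hT hcd, mem_compl_iff, not_not] at hb
  have htc' : t ∉ side T c d := notMem_side_swap hT.isAcyclic hcd.symm htc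
  have hedge : s(c, d) ≠ s(a, b) := by
    intro h
    rcases Sym2.eq_iff.mp h with ⟨rfl, rfl⟩ | ⟨rfl, rfl⟩
    · exact htc' ht
    · exact hO.swap_notMem hp hq
  rcases side_nested hT hab hcd hedge with h | h | h | h
  · exact htc' (h ht)
  · exact notMem_side_swap hT.isAcyclic hab.symm (mem_side_self T b a) (h hb)
  · have ha : a ∈ side T c d :=
      mem_side_of_adj hab.symm (by rw [Sym2.eq_swap]; exact hedge.symm) hb
    exact disjoint_left.mp h (mem_side_self T a b) ha
  · refine hcons _ hp _ hq (fun heq => ?_) ⟨?_, ?_⟩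
    · obtain ⟨rfl, rfl⟩ := Prod.mk.inj (hbij.eq_of_inducedSep_eq hab hcd heq)
      exact htc' ht
    · refine biUnion_subset_biUnion_left ?_
      rw [side_swap_eq_compl hT hcd, compl_subset_iff_union, union_comm, h]
    · refine biUnion_subset_biUnion_left ?_
      rw [side_swap_eq_compl hT hab, compl_subset_iff_union, h]

lemma exists_forall_mem_side_of_consistent [Finite ι] (hT : T.IsTree)
    (hbij : EdgeSepBij T Vt N) (hO : IsOrientation N O) (hcons : Consistent O) :
    ∃ t, ∀ a b, T.Adj a b → inducedSep T Vt a b ∈ O → t ∈ side T b a := by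
  have : Nonempty ι := hT.connected.nonempty
  obtain ⟨t, ht⟩ := Finite.exists_max fun t => (edgesTowards T Vt O t).ncard
  refine ⟨t, fun a b hab hp => ?_⟩
  by_contra hta
  rw [side_swap_eq_compl hT hab, mem_compl_iff, not_not] at hta
  have hlt : (edgesTowards T Vt O t).ncard < (edgesTowards T Vt O b).ncard := by
    refine ncard_lt_ncard <| (ssubset_iff_of_subset ?_).mpr ⟨(a, b), ?_, ?_⟩
    · exact edgesTowards_subset hT hbij hO hcons hab hp hta
    · exact ⟨hab, hp, mem_side_self T b a⟩
    · exact fun h => notMem_side_swap hT.isAcyclic hab hta h.2.2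
  exact (ht b).not_gt hlt

lemma IsOrientation.eq_Otow (hO : IsOrientation N O) (hT : T.IsAcyclic)
    (hbij : EdgeSepBij T Vt N)
    (ht : ∀ a b, T.Adj a b → inducedSep T Vt a b ∈ O → t ∈ side T b a) :
    O = Otow T Vt t := by
  ext p
  constructor
  · intro hp
    obtain ⟨⟨a, b⟩, ⟨hab, rfl⟩, -⟩ := hbij.2 p (hO.1 hp)
    exact ⟨a, b, hab, ht a b hab hp, rfl⟩
  · rintro ⟨a, b, hab, htb, rfl⟩
    by_contra hp
    have hswap : inducedSep T Vt b a ∈ O := not_not.mp (mt (hO.2 _ (hbij.1 a b hab)).mpr hp)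
    exact notMem_side_swap hT hab (ht b a hab.symm hswap) htb

end TreeDecomp

theorem stmt_0_general {V : Type*} (G : SimpleGraph V)
    {ι : Type*} [Fintype ι] (T : SimpleGraph ι) (Vt : ι → Set V)
    (N : Set (Set V × Set V))
    (hproper : ProperSystem N)
    (htd : IsTreeDecomp G T Vt) (hbij : EdgeSepBij T Vt N)
    (O : Set (Set V × Set V)) (hO : IsOrientation N O) :
    (∃ t : ι, O = Otow T Vt t) ↔ Consistent O := by
  refine ⟨?_, fun hcons => ?_⟩
  · rintro ⟨t, rfl⟩
    exact htd.consistent_Otow hbij (fun a b hab => hproper _ (hbij.1 a b hab)) t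
  · obtain ⟨t, ht⟩ := exists_forall_mem_side_of_consistent htd.1 hbij hO hcons
    exact ⟨t, hO.eq_Otow htd.1.isAcyclic hbij ht⟩

/-- Theorem 1.1(i): the orientations of `N` induced by nodes of `T` are precisely the
consistent orientations of `N`. -/
theorem stmt_0 {V : Type*} [Fintype V] (G : SimpleGraph V)
    {ι : Type*} [Fintype ι] (T : SimpleGraph ι) (Vt : ι → Set V)
    (N : Set (Set V × Set V))
    (hsys : IsSepSystem G N) (hnested : NestedSystem N) (hproper : ProperSystem N)
    (htd : IsTreeDecomp G T Vt) (hbij : EdgeSepBij T Vt N)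
    (O : Set (Set V × Set V)) (hO : IsOrientation N O) :
    (∃ t : ι, O = Otow T Vt t) ↔ Consistent O :=
  stmt_0_general G T Vt N hproper htd hbij O hO

end CanonicalTD
end

section
/- Let G be a finite graph, let N be a nested proper separation system of G, and let (T,𝒱) be a tree-decomposition of G such that the map assigning to each oriented edge of T the separation it induces is a bijection onto N. Then distinct nodes t ≠ t' of T induce distinct orientations of N, i.e., O(t) ≠ O(t'). -/
open SimpleGraph Set

namespace CanonicalTD

variable {V : Type*} {ι : Type*}

/-! The first edge `ab` of the `t`–`t'` path in `T` has `t` on its `a`-side and `t'` on its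
`b`-side, so its induced separation lies in `O(t')`. By injectivity of the edge-to-separation
map, `(a, b)` is the only oriented edge inducing it, and it does not point towards `t`. -/

lemma disjoint_side_side {T : SimpleGraph ι} (hT : T.IsAcyclic) {a b : ι} (hab : T.Adj a b) :
    Disjoint (side T a b) (side T b a) := by
  rw [Set.disjoint_left]
  intro t hta htb
  have hbridge := isBridge_iff.mp (isAcyclic_iff_forall_adj_isBridge.mp hT hab)
  rw [side, Set.mem_ofPred_eq, Sym2.eq_swap] at htb
  exact hbridge (hta.trans htb.symm)

lemma exists_adj_mem_side_mem_side {T : SimpleGraph ι} (hT : T.Preconnected) {t t' : ι}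
    (htt' : t ≠ t') : ∃ a b, T.Adj a b ∧ t ∈ side T a b ∧ t' ∈ side T b a := by
  classical
  obtain ⟨p, hp⟩ := (hT t t').some.toPath
  cases p with
  | nil => exact absurd rfl htt'
  | @cons _ s _ hts q =>
    have ht_notMem : t ∉ q.support := (Walk.cons_isPath_iff hts q).mp hp |>.2
    refine ⟨t, s, hts, Reachable.refl _, ⟨q.transfer _ fun e he => ?_⟩⟩
    rw [edgeSet_deleteEdges]
    refine ⟨q.edges_subset_edgeSet he, fun he' => ht_notMem ?_⟩
    rw [Set.mem_singleton_iff, Sym2.eq_swap] at he'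
    exact q.fst_mem_support_of_mem_edges (he' ▸ he)

lemma EdgeSepBij.eq_of_inducedSep_eq_s2 {T : SimpleGraph ι} {Vt : ι → Set V}
    {N : Set (Set V × Set V)} (hbij : EdgeSepBij T Vt N) {a b t1 t2 : ι} (hab : T.Adj a b)
    (h12 : T.Adj t1 t2) (heq : inducedSep T Vt t1 t2 = inducedSep T Vt a b) :
    t1 = a ∧ t2 = b := by
  obtain ⟨e, -, huniq⟩ := hbij.2 _ (hbij.1 a b hab)
  exact Prod.ext_iff.mp ((huniq (t1, t2) ⟨h12, heq⟩).trans (huniq (a, b) ⟨hab, rfl⟩).symm)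

lemma EdgeSepBij.mem_side_of_inducedSep_mem_Otow {T : SimpleGraph ι} {Vt : ι → Set V}
    {N : Set (Set V × Set V)} (hbij : EdgeSepBij T Vt N) {a b t : ι} (hab : T.Adj a b)
    (hmem : inducedSep T Vt a b ∈ Otow T Vt t) : t ∈ side T b a := by
  obtain ⟨t1, t2, h12, ht, heq⟩ := hmem
  obtain ⟨rfl, rfl⟩ := hbij.eq_of_inducedSep_eq_s2 hab h12 heq.symm
  exact ht

theorem stmt_2_general {V : Type*} (G : SimpleGraph V)
    {ι : Type*} (T : SimpleGraph ι) (Vt : ι → Set V)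
    (N : Set (Set V × Set V))
    (htd : IsTreeDecomp G T Vt) (hbij : EdgeSepBij T Vt N) :
    ∀ t t' : ι, t ≠ t' → Otow T Vt t ≠ Otow T Vt t' := by
  intro t t' htt' hO
  obtain ⟨a, b, hab, hta, ht'b⟩ :=
    exists_adj_mem_side_mem_side htd.1.connected.preconnected htt'
  have htb : t ∈ side T b a :=
    hbij.mem_side_of_inducedSep_mem_Otow hab (hO ▸ ⟨a, b, hab, ht'b, rfl⟩)
  exact Set.disjoint_left.mp (disjoint_side_side htd.1.isAcyclic hab) hta htb

/-- Distinct nodes of `T` induce distinct orientations of `N`. -/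
theorem stmt_2 {V : Type*} [Fintype V] (G : SimpleGraph V)
    {ι : Type*} [Fintype ι] (T : SimpleGraph ι) (Vt : ι → Set V)
    (N : Set (Set V × Set V))
    (hsys : IsSepSystem G N) (hnested : NestedSystem N) (hproper : ProperSystem N)
    (htd : IsTreeDecomp G T Vt) (hbij : EdgeSepBij T Vt N) :
    ∀ t t' : ι, t ≠ t' → Otow T Vt t ≠ Otow T Vt t' :=
  stmt_2_general G T Vt N htd hbij

end CanonicalTD
end

section
/- Let k ∈ ℕ and let G be a finite (k−1)-connected graph such that every pair x,y of adjacent vertices satisfies at least one of: (i) x and y have at least k−3 common neighbours; (ii) there are at least ⌊3(k−2)/2⌋ internally vertex-disjoint x–y paths in G each different from the edge xy; (iii) x and y lie together in some k-block of G. Then every k-block X of G is well separated in the set S_k of all proper separations of G of order < k. Indeed, for any two crossing separations (A,B),(C,D) ∈ P_k(X), the separation (A∪C, B∩D) has order < k (and hence lies in P_k(X)). -/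
open SimpleGraph Set

namespace CanonicalTD

variable {V : Type*} {ι : Type*}

/-!
Let `(A,B), (C,D) ∈ P_k(X)` cross. The order is submodular:
`|(A ∪ C) ∩ (B ∩ D)| + |(A ∩ C) ∩ (B ∪ D)| ≤ |A ∩ B| + |C ∩ D| ≤ 2(k - 1)`, so it suffices that
the opposite corner `(A ∩ C, B ∪ D)` has order at least `k - 1`. If that corner is proper, this
is `(k-1)`-connectivity. Otherwise `A ∩ C ⊆ B ∪ D`, and since the separations cross we may assume
`(A ∩ B) ∖ D ≠ ∅`. If `|A ∩ C| ≤ k - 2`, connectivity yields an edge `xy` from `(A ∩ B) ∖ D` to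
`(C ∩ D) ∖ B`, and `x, y ∈ A ∩ C`. Each alternative for `xy` then fails by counting in `A ∩ C`:
common neighbours of `x` and `y` and any `(<k)`-inseparable set containing both lie in `A ∩ C`,
while every `x`–`y` path has an inner vertex in `(A ∩ B) ∪ (C ∩ D)`, and two of them unless that
vertex lies in `A ∩ C`, so at most `⌊(3k - 8)/2⌋` such paths are internally disjoint.
Finally, two crossing maximal elements of `P_k(X)` would both lie below their corner, which is
again in `P_k(X)`.
-/

def sepSup (p q : Set V × Set V) : Set V × Set V := (p.1 ∪ q.1, p.2 ∩ q.2)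

def sepInf (p q : Set V × Set V) : Set V × Set V := (p.1 ∩ q.1, p.2 ∪ q.2)

def interiorVerts {G : SimpleGraph V} {x y : V} (P : G.Walk x y) : Set V :=
  {v | v ∈ P.support ∧ v ≠ x ∧ v ≠ y}

/-- The alternatives (i)–(iii) of the theorem for a pair `x, y` of vertices. -/
def EdgeCondition (G : SimpleGraph V) (k : ℕ) (x y : V) : Prop :=
  (k - 3 ≤ {z : V | G.Adj x z ∧ G.Adj y z}.ncard) ∨
  (∃ Ps : Fin (3 * (k - 2) / 2) → G.Walk x y,
    (∀ i, (Ps i).IsPath) ∧ (∀ i, 2 ≤ (Ps i).length) ∧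
    ∀ i j, i ≠ j → ∀ v ∈ (Ps i).support, v ∈ (Ps j).support → v = x ∨ v = y) ∨
  (∃ X : Set V, IsBlock G k X ∧ x ∈ X ∧ y ∈ X)

theorem two_mul_card_le_ncard_add_ncard {ι α : Type*} [Fintype ι] [Finite α] {J : ι → Set α}
    {W Z : Set α} (hJ : Pairwise fun i j => Disjoint (J i) (J j)) (hJW : ∀ i, J i ⊆ W)
    (hne : ∀ i, (J i).Nonempty) (hJZ : ∀ i, J i ⊆ Z ∨ 1 < (J i).ncard) :
    2 * Fintype.card ι ≤ W.ncard + Z.ncard := by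
  have hsum : ∀ K : ι → Set α, Pairwise (fun i j => Disjoint (K i) (K j)) →
      ∑ i, (K i).ncard = (⋃ i, K i).ncard := fun K hK => by
    rw [ncard_iUnion_of_finite (fun _ => toFinite _) hK, finsum_eq_sum_of_fintype]
  have hJZ' : Pairwise fun i j => Disjoint (J i ∩ Z) (J j ∩ Z) :=
    fun i j hij => (hJ hij).mono inter_subset_left inter_subset_left
  calc 2 * Fintype.card ι = ∑ _i : ι, 2 := by simp [mul_comm]
    _ ≤ ∑ i, ((J i).ncard + (J i ∩ Z).ncard) := Finset.sum_le_sum fun i _ => by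
        rcases hJZ i with h | h
        · rw [inter_eq_left.2 h]
          have := (hne i).ncard_pos (toFinite _)
          omega
        · omega
    _ = (⋃ i, J i).ncard + (⋃ i, J i ∩ Z).ncard := by
        rw [Finset.sum_add_distrib, hsum J hJ, hsum _ hJZ']
    _ ≤ W.ncard + Z.ncard :=
        add_le_add (ncard_le_ncard (iUnion_subset hJW))
          (ncard_le_ncard (iUnion_subset fun _ => inter_subset_right))

section Separation

variable {G : SimpleGraph V} {p q : Set V × Set V}

theorem IsSep.mem_right_of_notMem_left (hp : IsSep G p) {v : V} (hv : v ∉ p.1) : v ∈ p.2 :=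
  (hp.1 ▸ mem_univ v : v ∈ p.1 ∪ p.2).resolve_left hv

theorem IsSep.mem_left_of_notMem_right (hp : IsSep G p) {v : V} (hv : v ∉ p.2) : v ∈ p.1 :=
  (hp.1 ▸ mem_univ v : v ∈ p.1 ∪ p.2).resolve_right hv

theorem IsSep.mem_left_of_adj (hp : IsSep G p) {a b : V} (ha : a ∈ p.1) (ha' : a ∉ p.2)
    (hab : G.Adj a b) : b ∈ p.1 :=
  by_contra fun hb => hp.2 a ⟨ha, ha'⟩ b ⟨hp.mem_right_of_notMem_left hb, hb⟩ hab

theorem IsSep.not_adj (hp : IsSep G p) {a b : V} (ha : a ∈ p.1) (ha' : a ∉ p.2) (hb : b ∉ p.1) :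
    ¬G.Adj a b :=
  fun hab => hb (hp.mem_left_of_adj ha ha' hab)

theorem IsSep.sup (hp : IsSep G p) (hq : IsSep G q) : IsSep G (sepSup p q) := by
  refine ⟨eq_univ_of_forall fun v => ?_, fun a ha b hb hab => ?_⟩
  · by_cases hvp : v ∈ p.1
    · exact Or.inl (Or.inl hvp)
    by_cases hvq : v ∈ q.1
    · exact Or.inl (Or.inr hvq)
    exact Or.inr ⟨hp.mem_right_of_notMem_left hvp, hq.mem_right_of_notMem_left hvq⟩
  obtain ⟨ha1, ha2⟩ := ha
  obtain ⟨-, hb⟩ := hb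
  simp only [sepSup, mem_union, mem_inter_iff, not_or, not_and] at ha1 ha2 hb
  by_cases hap : a ∈ p.2
  · exact hq.not_adj (hq.mem_left_of_notMem_right (ha2 hap)) (ha2 hap) hb.2 hab
  · exact hp.not_adj (hp.mem_left_of_notMem_right hap) hap hb.1 hab

theorem IsSep.inf (hp : IsSep G p) (hq : IsSep G q) : IsSep G (sepInf p q) := by
  refine ⟨eq_univ_of_forall fun v => ?_, fun a ha b hb hab => ?_⟩
  · by_cases hvp : v ∈ p.2
    · exact Or.inr (Or.inl hvp)
    by_cases hvq : v ∈ q.2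
    · exact Or.inr (Or.inr hvq)
    exact Or.inl ⟨hp.mem_left_of_notMem_right hvp, hq.mem_left_of_notMem_right hvq⟩
  obtain ⟨⟨hap, haq⟩, ha⟩ := ha
  obtain ⟨-, hb⟩ := hb
  simp only [sepInf, mem_union, mem_inter_iff, not_or, not_and] at ha hb
  by_cases hbp : b ∈ p.1
  · exact hq.not_adj haq ha.2 (hb hbp) hab
  · exact hp.not_adj hap ha.1 hbp hab

theorem IsSep.diff_left (hp : IsSep G p) {S : Set V} (hS : S ⊆ p.2)
    (hSadj : ∀ s ∈ S, ∀ a ∈ p.1 \ p.2, ¬G.Adj s a) : IsSep G (p.1 \ S, p.2) := by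
  refine ⟨eq_univ_of_forall fun v => ?_, fun a ha b hb hab => ?_⟩
  · by_cases hv : v ∈ p.2
    · exact Or.inr hv
    · exact Or.inl ⟨hp.mem_left_of_notMem_right hv, fun h => hv (hS h)⟩
  obtain ⟨⟨ha1, -⟩, ha2⟩ := ha
  obtain ⟨-, hb⟩ := hb
  by_cases hbS : b ∈ S
  · exact hSadj b hbS a ⟨ha1, ha2⟩ hab.symm
  · exact hp.not_adj ha1 ha2 (fun h => hb ⟨h, hbS⟩) hab

theorem sepOrder_sepSup_add_sepOrder_sepInf_le [Finite V] (p q : Set V × Set V) :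
    sepOrder (sepSup p q) + sepOrder (sepInf p q) ≤ sepOrder p + sepOrder q := by
  simp only [sepOrder, sepSup, sepInf]
  rw [← ncard_union_add_ncard_inter _ _ (toFinite _) (toFinite _),
    ← ncard_union_add_ncard_inter (p.1 ∩ p.2) _ (toFinite _) (toFinite _)]
  have hinter : (p.1 ∪ q.1) ∩ (p.2 ∩ q.2) ∩ (p.1 ∩ q.1 ∩ (p.2 ∪ q.2)) =
      p.1 ∩ p.2 ∩ (q.1 ∩ q.2) := by
    ext v
    simp only [mem_inter_iff, mem_union]
    tauto
  have hunion : (p.1 ∪ q.1) ∩ (p.2 ∩ q.2) ∪ p.1 ∩ q.1 ∩ (p.2 ∪ q.2) ⊆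
      p.1 ∩ p.2 ∪ q.1 ∩ q.2 := by
    intro v
    simp only [mem_inter_iff, mem_union]
    tauto
  rw [hinter]
  exact Nat.add_le_add_right (ncard_le_ncard hunion (toFinite _)) _

theorem IsSep.exists_dart_fst_mem_inter (hp : IsSep G p) {u v : V} (w : G.Walk u v)
    (hu : u ∈ p.1) (hv : v ∉ p.1) : ∃ d ∈ w.darts, d.fst ∈ p.1 ∩ p.2 := by
  obtain ⟨d, hd, hfst, hsnd⟩ := w.exists_boundary_dart p.1 hu hv
  exact ⟨d, hd, hfst, by_contra fun h => hp.not_adj hfst h hsnd d.adj⟩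

theorem interiorVerts_reverse {x y : V} (P : G.Walk x y) :
    interiorVerts P.reverse = interiorVerts P := by
  ext v
  simp only [interiorVerts, Walk.support_reverse, List.mem_reverse, mem_ofPred_eq]
  tauto

theorem interiorVerts_nonempty {x y : V} {P : G.Walk x y} (hP : P.IsPath)
    (hlen : 2 ≤ P.length) : (interiorVerts P).Nonempty := by
  have hinj {i j : ℕ} (hi : i ≤ P.length) (hj : j ≤ P.length) (h : P.getVert i = P.getVert j) :
      i = j := hP.getVert_injOn hi hj h
  refine ⟨P.getVert 1, P.getVert_mem_support 1, fun h => ?_, fun h => ?_⟩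
  · have := hinj (by omega) (Nat.zero_le _) (h.trans P.getVert_zero.symm)
    omega
  · have := hinj (by omega) le_rfl (h.trans P.getVert_length.symm)
    omega

theorem IsSep.exists_interiorVerts_mem_inter (hp : IsSep G p) {x y : V} {P : G.Walk x y}
    (hP : P.IsPath) (hy : y ∈ p.1) (hy' : y ∉ p.2) {v : V} (hv : v ∈ P.support)
    (hvp : v ∉ p.1) : ∃ s ∈ interiorVerts P, s ∈ p.1 ∩ p.2 := by
  classical
  obtain ⟨d, hd, hsep⟩ :=
    hp.exists_dart_fst_mem_inter (P.dropUntil v hv).reverse hy hvp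
  have hdP : d.symm ∈ P.darts :=
    Walk.darts_dropUntil_subset_darts _ _ (by simpa using hd)
  have htail : d.fst ∈ P.support.tail := by
    rw [← Walk.map_snd_darts]
    exact List.mem_map_of_mem (f := (·.snd)) hdP
  have hx : x ∉ P.support.tail := by
    have hnd := hP.support_nodup
    rw [← Walk.cons_tail_support] at hnd
    exact (List.nodup_cons.1 hnd).1
  exact ⟨d.fst, ⟨List.mem_of_mem_tail htail, fun h => hx (h ▸ htail),
    fun h => hy' (h ▸ hsep.2)⟩, hsep⟩

theorem two_mul_card_add_four_le_of_disjoint_paths [Finite V] {ι : Type*} [Fintype ι]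
    (hp : IsSep G p) (hq : IsSep G q) (hdeg : p.1 ∩ q.1 ⊆ p.2 ∪ q.2) {x y : V}
    (hx : x ∈ p.1 ∩ p.2) (hxq : x ∉ q.2) (hy : y ∈ q.1 ∩ q.2) (hyp : y ∉ p.2)
    (Ps : ι → G.Walk x y) (hpath : ∀ i, (Ps i).IsPath) (hlen : ∀ i, 2 ≤ (Ps i).length)
    (hdisj : Pairwise fun i j => Disjoint (interiorVerts (Ps i)) (interiorVerts (Ps j))) :
    2 * Fintype.card ι + 4 ≤ sepOrder p + sepOrder q + (p.1 ∩ q.1).ncard := by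
  set W := p.1 ∩ p.2 ∪ q.1 ∩ q.2
  set Z := p.1 ∩ q.1
  have hxZ : x ∈ Z := ⟨hx.1, hq.mem_left_of_notMem_right hxq⟩
  have hyZ : y ∈ Z := ⟨hp.mem_left_of_notMem_right hyp, hy.1⟩
  have hxy : x ≠ y := fun h => hxq (h ▸ hy.2)
  -- each path has an inner vertex in `W`, and a second one unless it stays inside `Z`
  have hleave : ∀ i, ∀ v ∈ (Ps i).support, v ∉ Z → ∃ s ∈ interiorVerts (Ps i) ∩ W, s ≠ v := by
    intro i v hv hvZ
    by_cases hvp : v ∈ p.1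
    · have hvq : v ∉ q.1 := fun h => hvZ ⟨hvp, h⟩
      obtain ⟨s, hs, hsq⟩ := hq.exists_interiorVerts_mem_inter (hpath i).reverse hxZ.2 hxq
        (by simpa using hv) hvq
      rw [interiorVerts_reverse] at hs
      exact ⟨s, ⟨hs, Or.inr hsq⟩, fun h => hvq (h ▸ hsq.1)⟩
    · obtain ⟨s, hs, hsp⟩ := hp.exists_interiorVerts_mem_inter (hpath i) hyZ.1 hyp hv hvp
      exact ⟨s, ⟨hs, Or.inl hsp⟩, fun h => hvp (h ▸ hsp.1)⟩
  have hne : ∀ i, (interiorVerts (Ps i) ∩ W).Nonempty := by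
    intro i
    by_cases hall : ∀ v ∈ (Ps i).support, v ∈ Z
    · obtain ⟨u, hu⟩ := interiorVerts_nonempty (hpath i) (hlen i)
      have huZ := hall u hu.1
      exact ⟨u, hu, (hdeg huZ).imp (fun h => ⟨huZ.1, h⟩) (fun h => ⟨huZ.2, h⟩)⟩
    · push Not at hall
      obtain ⟨v, hv, hvZ⟩ := hall
      obtain ⟨s, hs, -⟩ := hleave i v hv hvZ
      exact ⟨s, hs⟩
  have hJZ : ∀ i, interiorVerts (Ps i) ∩ W ⊆ Z \ {x, y} ∨ 1 < (interiorVerts (Ps i) ∩ W).ncard := by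
    refine fun i => or_iff_not_imp_left.2 fun hsub => ?_
    obtain ⟨v, hv, hvZ⟩ := not_subset.1 hsub
    obtain ⟨s, hs, hsv⟩ := hleave i v hv.1.1 fun h => hvZ ⟨h, by simp [hv.1.2.1, hv.1.2.2]⟩
    exact (one_lt_ncard_iff (toFinite _)).2 ⟨s, v, hs, hv, hsv⟩
  have hcount := two_mul_card_le_ncard_add_ncard (W := W \ {x, y})
    (fun i j hij => (hdisj hij).mono inter_subset_left inter_subset_left)
    (fun i v hv => ⟨hv.2, by simp [hv.1.2.1, hv.1.2.2]⟩) hne hJZ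
  have hW := ncard_sdiff_add_ncard_of_subset (s := {x, y}) (t := W)
    (insert_subset_iff.2 ⟨Or.inl hx, singleton_subset_iff.2 (Or.inr hy)⟩) (toFinite _)
  have hZ := ncard_sdiff_add_ncard_of_subset (s := {x, y}) (t := Z)
    (insert_subset_iff.2 ⟨hxZ, singleton_subset_iff.2 hyZ⟩) (toFinite _)
  have hWle : W.ncard ≤ sepOrder p + sepOrder q := ncard_union_le _ _
  rw [ncard_pair hxy] at hW hZ
  omega

theorem diff_nonempty_or_diff_nonempty_of_not_nested (hp : IsSep G p) (hq : IsSep G q)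
    (hdeg : p.1 ∩ q.1 ⊆ p.2 ∪ q.2) (hcross : ¬Nested p q) :
    ((p.1 ∩ p.2) \ q.2).Nonempty ∨ ((q.1 ∩ q.2) \ p.2).Nonempty := by
  by_contra! h
  obtain ⟨h1, h2⟩ := h
  refine hcross (Or.inr (Or.inr (Or.inl ⟨fun v hv => ?_, fun v hv => ?_⟩)))
  · by_contra hvq
    have hvp : v ∉ p.2 := fun hvp => eq_empty_iff_forall_notMem.1 h1 v ⟨⟨hv, hvp⟩, hvq⟩
    exact ((hdeg ⟨hv, hq.mem_left_of_notMem_right hvq⟩).resolve_left hvp) |> hvq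
  · by_contra hvp
    have hvq : v ∉ q.2 := fun hvq => eq_empty_iff_forall_notMem.1 h2 v ⟨⟨hv, hvq⟩, hvp⟩
    exact ((hdeg ⟨hp.mem_left_of_notMem_right hvp, hv⟩).resolve_left hvp) |> hvq

theorem ncard_common_neighbors_add_two_le [Finite V] (hp : IsSep G p) (hq : IsSep G q) {x y : V}
    (hx : x ∈ q.1 \ q.2) (hy : y ∈ p.1 \ p.2) (hxy : G.Adj x y) :
    {z | G.Adj x z ∧ G.Adj y z}.ncard + 2 ≤ (p.1 ∩ q.1).ncard := by
  have hsub : {z | G.Adj x z ∧ G.Adj y z} ⊆ (p.1 ∩ q.1) \ {x, y} := by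
    rintro z ⟨hxz, hyz⟩
    refine ⟨⟨hp.mem_left_of_adj hy.1 hy.2 hyz, hq.mem_left_of_adj hx.1 hx.2 hxz⟩, ?_⟩
    rintro (rfl | rfl)
    exacts [G.irrefl hxz, G.irrefl hyz]
  have hxy' : {x, y} ⊆ p.1 ∩ q.1 := insert_subset_iff.2
    ⟨⟨hp.mem_left_of_adj hy.1 hy.2 hxy.symm, hx.1⟩,
      singleton_subset_iff.2 ⟨hy.1, hq.mem_left_of_adj hx.1 hx.2 hxy⟩⟩
  have := ncard_sdiff_add_ncard_of_subset hxy' (toFinite _)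
  rw [ncard_pair hxy.ne] at this
  have := ncard_le_ncard hsub (toFinite _)
  omega

theorem Inseparable'.subset_inter {k : ℕ} {X : Set V} (hX : Inseparable' G k X)
    (hp : IsSep G p) (hpk : sepOrder p < k) (hq : IsSep G q) (hqk : sepOrder q < k) {x y : V}
    (hx : x ∈ X) (hxq : x ∉ q.2) (hy : y ∈ X) (hyp : y ∉ p.2) : X ⊆ p.1 ∩ q.1 :=
  Set.subset_inter ((hX p hp hpk).resolve_right fun h => hyp (h hy))
    ((hX q hq hqk).resolve_right fun h => hxq (h hx))

theorem mem_blockProfile_of_sepOrder_lt [Finite V] {k : ℕ} {X : Set V} {r : Set V × Set V}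
    (hr : IsSep G r) (hr1 : (r.1 \ r.2).Nonempty) (hX : k ≤ X.ncard) (hXr : X ⊆ r.2)
    (hlt : sepOrder r < k) : r ∈ blockProfile G k X := by
  have hXr1 : ¬X ⊆ r.1 := fun h => by
    have := ncard_le_ncard (subset_inter h hXr) (toFinite _)
    unfold sepOrder at hlt
    omega
  exact ⟨⟨hr, ⟨hr1, (sdiff_nonempty.2 hXr1).mono (sdiff_subset_sdiff_left hXr)⟩, hlt⟩, hXr, hXr1⟩

theorem sepSup_mem_blockProfile [Finite V] {k : ℕ} {X : Set V} (hX : k ≤ X.ncard)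
    (hp : p ∈ blockProfile G k X) (hq : q ∈ blockProfile G k X) (hlt : sepOrder (sepSup p q) < k) :
    sepSup p q ∈ blockProfile G k X :=
  mem_blockProfile_of_sepOrder_lt (hp.1.1.sup hq.1.1)
    (hp.1.2.1.1.mono (sdiff_subset_sdiff subset_union_left inter_subset_left)) hX
    (subset_inter hp.2.1 hq.2.1) hlt

theorem wellSepIn_of_sepSup_mem {k : ℕ} {X : Set V}
    (h : ∀ p ∈ blockProfile G k X, ∀ q ∈ blockProfile G k X, ¬Nested p q →
      sepSup p q ∈ blockProfile G k X) :
    WellSepIn G k X (Sk G k) := by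
  intro p q hp hq
  by_contra hpq
  have hsup := h p hp.1.1 q hq.1.1 hpq
  have hp' : sepSup p q = p := hp.2 _ ⟨hsup, hsup.1⟩ ⟨subset_union_left, inter_subset_left⟩
  have hq' : sepSup p q = q := hq.2 _ ⟨hsup, hsup.1⟩ ⟨subset_union_right, inter_subset_right⟩
  rw [← hp'.symm.trans hq'] at hpq
  exact hpq (Or.inl ⟨subset_rfl, subset_rfl⟩)

end Separation

section Corner

variable [Fintype V] {G : SimpleGraph V} {k : ℕ} {p q : Set V × Set V}

theorem IsKConnected.le_sepOrder {m : ℕ} (hconn : IsKConnected G m) (hp : IsSep G p)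
    (hprop : ProperSep p) : m ≤ sepOrder p := by
  by_contra! h
  obtain ⟨⟨a, haA, haB⟩, ⟨b, hbB, hbA⟩⟩ := hprop
  obtain ⟨w⟩ := (hconn.2 _ h).preconnected ⟨a, fun h => haB h.2⟩ ⟨b, fun h => hbA h.1⟩
  obtain ⟨d, hd, hsep⟩ := hp.exists_dart_fst_mem_inter (w.map (Embedding.induce _).toHom) haA hbA
  have hsupp := Walk.dart_fst_mem_support_of_mem_darts _ hd
  rw [Walk.support_map, List.mem_map] at hsupp
  obtain ⟨v, -, hv⟩ := hsupp
  rw [← hv] at hsep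
  exact v.2 hsep

theorem IsKConnected.exists_adj_of_subset_union {m : ℕ} (hconn : IsKConnected G m)
    (hp : IsSep G p) (hprop : ProperSep p) (hpo : sepOrder p ≤ m) (hq : IsSep G q)
    (hdeg : p.1 ∩ q.1 ⊆ p.2 ∪ q.2) (hne : ((p.1 ∩ p.2) \ q.2).Nonempty) :
    ∃ x ∈ (p.1 ∩ p.2) \ q.2, ∃ y ∈ (q.1 ∩ q.2) \ p.2, G.Adj x y := by
  -- otherwise `(A ∩ B) ∖ D` can be dropped from the separator of `(A, B)`
  by_contra! hno
  set S := (p.1 ∩ p.2) \ q.2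
  have hS : IsSep G (p.1 \ S, p.2) := by
    refine hp.diff_left (fun s hs => hs.1.2) fun s hs a ha hsa => ?_
    by_cases haq : a ∈ q.1
    · exact hno s hs a ⟨⟨haq, (hdeg ⟨ha.1, haq⟩).resolve_left ha.2⟩, ha.2⟩ hsa
    · exact hq.not_adj (hq.mem_left_of_notMem_right hs.2) hs.2 haq hsa
  have hle := hconn.le_sepOrder hS
    ⟨hprop.1.mono fun a ha => ⟨⟨ha.1, fun h => ha.2 h.1.2⟩, ha.2⟩,
      hprop.2.mono fun b hb => ⟨hb.1, fun h => hb.2 h.1⟩⟩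
  have hinter : (p.1 \ S) ∩ p.2 = (p.1 ∩ p.2) \ S := by
    ext v
    simp only [mem_inter_iff, mem_sdiff]
    tauto
  have hcard : ((p.1 ∩ p.2) \ S).ncard + S.ncard = (p.1 ∩ p.2).ncard :=
    ncard_sdiff_add_ncard_of_subset sdiff_subset (toFinite _)
  have := hne.ncard_pos (toFinite _)
  simp only [sepOrder] at hle hpo
  rw [hinter] at hle
  omega

theorem sub_one_le_ncard_inter_of_subset_union (hconn : IsKConnected G (k - 1))
    (hpairs : ∀ x y, G.Adj x y → EdgeCondition G k x y) (hp : p ∈ Sk G k) (hq : q ∈ Sk G k)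
    (hdeg : p.1 ∩ q.1 ⊆ p.2 ∪ q.2) (hne : ((p.1 ∩ p.2) \ q.2).Nonempty) :
    k - 1 ≤ (p.1 ∩ q.1).ncard := by
  by_contra! hsmall
  have hpo : sepOrder p = k - 1 :=
    le_antisymm (Nat.le_sub_one_of_lt hp.2.2) (hconn.le_sepOrder hp.1 hp.2.1)
  have hqo : sepOrder q = k - 1 :=
    le_antisymm (Nat.le_sub_one_of_lt hq.2.2) (hconn.le_sepOrder hq.1 hq.2.1)
  obtain ⟨x, ⟨hxp, hxq⟩, y, ⟨hyq, hyp⟩, hxy⟩ :=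
    hconn.exists_adj_of_subset_union hp.1 hp.2.1 hpo.le hq.1 hdeg hne
  have hcommon := ncard_common_neighbors_add_two_le hp.1 hq.1
    ⟨hq.1.mem_left_of_notMem_right hxq, hxq⟩ ⟨hp.1.mem_left_of_notMem_right hyp, hyp⟩ hxy
  rcases hpairs x y hxy with hi | ⟨Ps, hpath, hlen, hdisj⟩ | ⟨X, hX, hxX, hyX⟩
  · omega
  · have := two_mul_card_add_four_le_of_disjoint_paths hp.1 hq.1 hdeg hxp hxq hyq hyp Ps hpath
      hlen fun i j hij => disjoint_left.2 fun v hvi hvj =>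
        (hdisj i j hij v hvi.1 hvj.1).elim hvi.2.1 hvi.2.2
    rw [Fintype.card_fin] at this
    omega
  · have := ncard_le_ncard (hX.2.1.subset_inter hp.1 hp.2.2 hq.1 hq.2.2 hxX hxq hyX hyp)
      (toFinite _)
    have := hX.1
    omega

theorem sepOrder_sepSup_lt (hconn : IsKConnected G (k - 1))
    (hpairs : ∀ x y, G.Adj x y → EdgeCondition G k x y) (hp : p ∈ Sk G k) (hq : q ∈ Sk G k)
    (hcross : ¬Nested p q) : sepOrder (sepSup p q) < k := by
  have hsub := sepOrder_sepSup_add_sepOrder_sepInf_le p q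
  have hpk := hp.2.2
  have hqk := hq.2.2
  suffices k - 1 ≤ sepOrder (sepInf p q) by omega
  by_cases hdeg : p.1 ∩ q.1 ⊆ p.2 ∪ q.2
  · have hinf : sepOrder (sepInf p q) = (p.1 ∩ q.1).ncard :=
      congrArg ncard (inter_eq_left.2 hdeg)
    rw [hinf]
    rcases diff_nonempty_or_diff_nonempty_of_not_nested hp.1 hq.1 hdeg hcross with hne | hne
    · exact sub_one_le_ncard_inter_of_subset_union hconn hpairs hp hq hdeg hne
    · rw [inter_comm]
      exact sub_one_le_ncard_inter_of_subset_union hconn hpairs hq hp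
        (by rwa [inter_comm, union_comm]) hne
  · obtain ⟨v, hv, hv'⟩ := not_subset.1 hdeg
    exact hconn.le_sepOrder (hp.1.inf hq.1)
      ⟨⟨v, hv, hv'⟩, hp.2.1.2.mono (sdiff_subset_sdiff subset_union_left inter_subset_left)⟩

end Corner

/-- Under the hypotheses of Theorem 3.4, every `k`-block of `G` is well separated in
`S_k`; indeed for any two crossing separations `(A,B), (C,D) ∈ P_k(X)` the corner
separation `(A ∪ C, B ∩ D)` has order `< k` and lies in `P_k(X)`. -/
theorem stmt_11 {V : Type*} [Fintype V] (G : SimpleGraph V) (k : ℕ)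
    (hconn : IsKConnected G (k - 1))
    (hpairs : ∀ x y : V, G.Adj x y →
      (k - 3 ≤ {z : V | G.Adj x z ∧ G.Adj y z}.ncard) ∨
      (∃ Ps : Fin (3 * (k - 2) / 2) → G.Walk x y,
        (∀ i, (Ps i).IsPath) ∧ (∀ i, 2 ≤ (Ps i).length) ∧
        ∀ i j, i ≠ j → ∀ v ∈ (Ps i).support, v ∈ (Ps j).support → v = x ∨ v = y) ∨
      (∃ X : Set V, IsBlock G k X ∧ x ∈ X ∧ y ∈ X)) :
    ∀ X : Set V, IsBlock G k X →
      WellSepIn G k X (Sk G k) ∧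
      ∀ p ∈ blockProfile G k X, ∀ q ∈ blockProfile G k X, ¬Nested p q →
        sepOrder (p.1 ∪ q.1, p.2 ∩ q.2) < k ∧
        (p.1 ∪ q.1, p.2 ∩ q.2) ∈ blockProfile G k X := by
  intro X hX
  have hcorner : ∀ p ∈ blockProfile G k X, ∀ q ∈ blockProfile G k X, ¬Nested p q →
      sepOrder (sepSup p q) < k ∧ sepSup p q ∈ blockProfile G k X := fun p hp q hq hcross =>
    have hlt := sepOrder_sepSup_lt hconn hpairs hp.1 hq.1 hcross
    ⟨hlt, sepSup_mem_blockProfile hX.1 hp hq hlt⟩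
  exact ⟨wellSepIn_of_sepSup_mem fun p hp q hq hcross => (hcorner p hp q hq hcross).2, hcorner⟩

end CanonicalTD
end

section
/- Let G be a finite graph, k ∈ ℕ, and let X be a k-block of G. Then the separations in S(X) are pairwise nested: any two tight separations (A,B) and (C,D) of G with X ⊆ B, X ⊆ D, A∖B the vertex set of a component of G − X, and C∖D the vertex set of a component of G − X, are nested. -/
/-!
A tight separation `(A, B)` is determined by `A ∖ B`: `B` is its complement, and `A` is `A ∖ B`
together with its neighbours. Hence two members of `S(X)` with the same component coincide.
Otherwise the components `K = A ∖ B` and `K' = C ∖ D` are disjoint, and `A ⊆ K ∪ N(K)` misses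
`K'`, since a component of `G - X` contains each of its neighbours outside `X`; thus `A ⊆ D`
and, symmetrically, `C ⊆ B`.
-/

open SimpleGraph Set

namespace CanonicalTD

variable {V : Type*} {ι : Type*}

section

variable {G : SimpleGraph V} {X : Set V}

theorem IsCompOf.mem_of_adj {D : Set V} (hD : IsCompOf G X D) {d v : V} (hd : d ∈ D)
    (hv : v ∉ X) (hadj : G.Adj d v) : v ∈ D := by
  have hconn : (G.induce (D ∪ {v})).Connected :=
    connected_induce_union hD.2.1.preconnected .of_subsingleton hd rfl hadj
  rw [← hD.2.2 (D ∪ {v}) subset_union_left (union_subset hD.1 (by simpa using hv)) hconn]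
  exact Or.inr rfl

theorem IsCompOf.eq_or_disjoint {D₁ D₂ : Set V} (h₁ : IsCompOf G X D₁)
    (h₂ : IsCompOf G X D₂) : D₁ = D₂ ∨ Disjoint D₁ D₂ := by
  refine or_iff_not_imp_right.2 fun hne ↦ ?_
  rw [not_disjoint_iff_nonempty_inter] at hne
  have hconn := induce_union_connected h₁.2.1.preconnected h₂.2.1.preconnected hne
  have hsub := union_subset h₁.1 h₂.1
  exact (h₁.2.2 _ subset_union_left hsub hconn).symm.trans
    (h₂.2.2 _ subset_union_right hsub hconn)

theorem IsSep.mem_fst_or_mem_snd {p : Set V × Set V} (hp : IsSep G p) (v : V) :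
    v ∈ p.1 ∨ v ∈ p.2 :=
  (hp.1 ▸ mem_univ v : v ∈ p.1 ∪ p.2)

theorem IsSep.snd_eq_compl {p : Set V × Set V} (hp : IsSep G p) : p.2 = (p.1 \ p.2)ᶜ := by
  ext v
  refine ⟨fun hv h ↦ h.2 hv, fun hv ↦ ?_⟩
  by_contra hv2
  exact hv ⟨(hp.mem_fst_or_mem_snd v).resolve_right hv2, hv2⟩

theorem TightSep.exists_adj_of_mem_fst {p : Set V × Set V} (hp : TightSep G p) {v : V}
    (hv : v ∈ p.1) : v ∈ p.1 \ p.2 ∨ ∃ a ∈ p.1 \ p.2, G.Adj v a := by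
  by_cases hv2 : v ∈ p.2
  · exact Or.inr (hp v ⟨hv, hv2⟩).1
  · exact Or.inl ⟨hv, hv2⟩

theorem IsSep.mem_fst_of_adj {p : Set V × Set V} (hp : IsSep G p) {a v : V}
    (ha : a ∈ p.1 \ p.2) (hadj : G.Adj a v) : v ∈ p.1 := by
  by_contra hv
  exact hp.2 a ha v ⟨(hp.mem_fst_or_mem_snd v).resolve_left hv, hv⟩ hadj

theorem sepLE_of_diff_eq {p q : Set V × Set V} (hpSep : IsSep G p) (hp : TightSep G p)
    (hq : IsSep G q) (h : p.1 \ p.2 = q.1 \ q.2) : SepLE p q := by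
  refine ⟨fun v hv ↦ ?_, by rw [hq.snd_eq_compl, hpSep.snd_eq_compl, h]⟩
  rcases hp.exists_adj_of_mem_fst hv with hvA | ⟨a, ha, hadj⟩
  · exact (h ▸ hvA).1
  · exact hq.mem_fst_of_adj (h ▸ ha) hadj.symm

theorem fst_subset_snd_of_disjoint {p q : Set V × Set V} (hp : TightSep G p)
    (hpX : p.1 \ p.2 ⊆ Xᶜ) (hq : IsSep G q) (hqComp : IsCompOf G X (q.1 \ q.2))
    (hpq : Disjoint (p.1 \ p.2) (q.1 \ q.2)) : p.1 ⊆ q.2 := by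
  intro v hv
  rw [hq.snd_eq_compl]
  intro hvq
  rcases hp.exists_adj_of_mem_fst hv with hvA | ⟨a, ha, hadj⟩
  · exact hpq.notMem_of_mem_left hvA hvq
  · exact hpq.notMem_of_mem_left ha (hqComp.mem_of_adj hvq (hpX ha) hadj)

end

theorem stmt_12_general {V : Type*} (G : SimpleGraph V)
    (X : Set V) :
    ∀ p ∈ SX G X, ∀ q ∈ SX G X, Nested p q := by
  rintro p ⟨hpSep, hpTight, -, hpComp⟩ q ⟨hqSep, hqTight, -, hqComp⟩
  rcases hpComp.eq_or_disjoint hqComp with heq | hdisj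
  · exact Or.inl (sepLE_of_diff_eq hpSep hpTight hqSep heq)
  · exact Or.inr <| Or.inr <| Or.inl
      ⟨fst_subset_snd_of_disjoint hpTight hpComp.1 hqSep hqComp hdisj,
        fst_subset_snd_of_disjoint hqTight hqComp.1 hpSep hpComp hdisj.symm⟩

/-- The separations in `S(X)` are pairwise nested. -/
theorem stmt_12 {V : Type*} [Fintype V] (G : SimpleGraph V) (k : ℕ)
    (X : Set V) (hX : IsBlock G k X) :
    ∀ p ∈ SX G X, ∀ q ∈ SX G X, Nested p q :=
  stmt_12_general G X

end CanonicalTD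
end

section
/- Let G be a finite graph, k ∈ ℕ, let N ⊆ S_k be a nested proper separation system of G, and let (T,𝒱) be a tree-decomposition of G such that the map assigning to each oriented edge of T the separation it induces is a bijection onto N and such that V_t = ⋂_{(A,B)∈O(t)} B for every node t of T. Then for every k-block X of G and every node t of T: the k-profile P_k(X) inhabits t (i.e., P_k(X) ∩ N = O(t)) if and only if X ⊆ V_t. -/
open SimpleGraph Set

namespace CanonicalTD

variable {V : Type*} {ι : Type*}

/-! Every separation in `N` is induced by an edge of `T`, and one of its two
orientations points towards `t`, i.e. lies in `O(t)`. As `V_t` is the intersection of the sides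
`B` over `(A,B) ∈ O(t)`, `X ⊆ V_t` says that `X ⊆ B` for all of them; since `|X| ≥ k` exceeds
the order of every separation in `N`, this puts `O(t)` inside `P_k(X)`, and it rules out the
inverse of any element of `O(t)` lying in `P_k(X)`. -/

lemma reachable_deleteEdge_or {G : SimpleGraph ι} (hG : G.Connected) (u v w : ι) :
    (G.deleteEdges {s(u, v)}).Reachable u w ∨ (G.deleteEdges {s(u, v)}).Reachable v w := by
  set H := G.deleteEdges {s(u, v)}
  suffices ∀ {a b : ι}, G.Walk a b → (H.Reachable u a ∨ H.Reachable v a) →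
      H.Reachable u b ∨ H.Reachable v b from
    this (hG u w).some (Or.inl .rfl)
  intro a b p
  induction p with
  | nil => exact id
  | @cons a b c hab _ ih =>
    refine fun ha => ih ?_
    by_cases he : s(a, b) = s(u, v)
    · rcases Sym2.eq_iff.mp he with ⟨-, rfl⟩ | ⟨-, rfl⟩
      · exact Or.inr .rfl
      · exact Or.inl .rfl
    · have hab' : H.Adj a b := deleteEdges_adj.mpr ⟨hab, he⟩
      exact ha.imp (·.trans hab'.reachable) (·.trans hab'.reachable)

lemma mem_side_or_mem_side {T : SimpleGraph ι} (hT : T.Connected) (t1 t2 t : ι) :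
    t ∈ side T t1 t2 ∨ t ∈ side T t2 t1 := by
  simpa only [side, mem_ofPred_eq, Sym2.eq_swap (a := t2)] using reachable_deleteEdge_or hT t1 t2 t

lemma inducedSep_mem_Otow_or_swap_mem {T : SimpleGraph ι} (hT : T.Connected) (Vt : ι → Set V)
    {t1 t2 : ι} (hadj : T.Adj t1 t2) (t : ι) :
    inducedSep T Vt t1 t2 ∈ Otow T Vt t ∨ (inducedSep T Vt t1 t2).swap ∈ Otow T Vt t :=
  (mem_side_or_mem_side hT t1 t2 t).symm.imp
    (fun h => ⟨t1, t2, hadj, h, rfl⟩) (fun h => ⟨t2, t1, hadj.symm, h, rfl⟩)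

lemma mem_blockProfile_of_subset_snd [Finite V] {G : SimpleGraph V} {k : ℕ} {X : Set V}
    {p : Set V × Set V} (hX : k ≤ X.ncard) (hp : p ∈ Sk G k) (hXp : X ⊆ p.2) :
    p ∈ blockProfile G k X := by
  refine ⟨hp, hXp, fun hXp' => ?_⟩
  have : X.ncard ≤ sepOrder p := ncard_le_ncard (subset_inter hXp' hXp) (toFinite _)
  exact absurd hp.2.2 (by omega)

theorem stmt_15_general {V : Type*} [Fintype V] (G : SimpleGraph V) (k : ℕ)
    {ι : Type*} (T : SimpleGraph ι) (Vt : ι → Set V)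
    (N : Set (Set V × Set V)) (hNk : N ⊆ Sk G k)
    (htd : IsTreeDecomp G T Vt) (hbij : EdgeSepBij T Vt N)
    (hVt : ∀ t : ι, Vt t = ⋂ p ∈ Otow T Vt t, p.2) :
    ∀ X : Set V, IsBlock G k X → ∀ t : ι,
      (blockProfile G k X ∩ N = Otow T Vt t ↔ X ⊆ Vt t) := by
  intro X hX t
  rw [hVt t, subset_iInter₂_iff]
  refine ⟨fun h p hp => (h ▸ hp : p ∈ blockProfile G k X ∩ N).1.2.1, fun hXt => ?_⟩
  apply Subset.antisymm
  · rintro p ⟨hpX, hpN⟩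
    obtain ⟨⟨t1, t2⟩, ⟨hadj, rfl⟩, -⟩ := hbij.2 p hpN
    exact (inducedSep_mem_Otow_or_swap_mem htd.1.connected Vt hadj t).resolve_right
      fun hswap => hpX.2.2 (hXt _ hswap)
  · intro p hp
    obtain ⟨t1, t2, hadj, -, rfl⟩ := id hp
    have hpN := hbij.1 t1 t2 hadj
    exact ⟨mem_blockProfile_of_subset_snd hX.1 (hNk hpN) (hXt _ hp), hpN⟩

/-- A `k`-block profile `P_k(X)` inhabits a node `t` of `T` iff `X ⊆ V_t`. -/
theorem stmt_15 {V : Type*} [Fintype V] (G : SimpleGraph V) (k : ℕ)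
    {ι : Type*} [Fintype ι] (T : SimpleGraph ι) (Vt : ι → Set V)
    (N : Set (Set V × Set V)) (hNk : N ⊆ Sk G k)
    (hsys : IsSepSystem G N) (hnested : NestedSystem N) (hproper : ProperSystem N)
    (htd : IsTreeDecomp G T Vt) (hbij : EdgeSepBij T Vt N)
    (hVt : ∀ t : ι, Vt t = ⋂ p ∈ Otow T Vt t, p.2) :
    ∀ X : Set V, IsBlock G k X → ∀ t : ι,
      (blockProfile G k X ∩ N = Otow T Vt t ↔ X ⊆ Vt t) :=
  stmt_15_general G k T Vt N hNk htd hbij hVt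

end CanonicalTD
end
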